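/- arXiv:2407.08468 — 2 statements merged into one kernel-verified Lean document; each statement's English description precedes it below -/
import Mathlib

section
/- The matching-based advantage estimator can be written as a linear combination of outcomes: (1/n) Σ_{i=1}^n (2π(X_i)−1)(Ŷ_i(1)−Ŷ_i(0)) = (1/n) Σ_{i=1}^n (2W_i−1)[(2π(X_i)−1) + K_M(π,i)/M] Y_i, where K_M(π,i) = Σ_{j=1}^n (2π(X_j)−1) M_{ji}. -/
open Finset

/-- Lemma 1: the matching-based advantage estimator is a linear combination of the
outcomes: `(1/n) Σᵢ (2π(Xᵢ)−1)(Ŷᵢ(1)−Ŷᵢ(0))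
  = (1/n) Σᵢ (2Wᵢ−1)[(2π(Xᵢ)−1) + K_M(π,i)/M] Yᵢ`,
where `K_M(π,i) = Σⱼ (2π(Xⱼ)−1) M_{ji}` and `M_{ji} = 1{i ∈ J_M(j)}`. -/
theorem matching_advantage_linear_combination {𝒳 : Type*} (n M : ℕ)
    (hn : 0 < n) (hM : 0 < M)
    (X : Fin n → 𝒳) (W : Fin n → ℝ) (Y : Fin n → ℝ)
    (hW : ∀ i, W i = 0 ∨ W i = 1)
    (J : Fin n → Finset (Fin n))
    (hJcard : ∀ i, (J i).card = M)
    (hJopp : ∀ i j, j ∈ J i → W j = 1 - W i)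
    (π : 𝒳 → ℝ) (hπ : ∀ x, π x = 0 ∨ π x = 1) :
    (1 / (n : ℝ)) * ∑ i, (2 * π (X i) - 1) *
        ((if W i = 1 then Y i else (1 / (M : ℝ)) * ∑ j ∈ J i, Y j)
          - (if W i = 0 then Y i else (1 / (M : ℝ)) * ∑ j ∈ J i, Y j))
      = (1 / (n : ℝ)) * ∑ i, (2 * W i - 1) *
          ((2 * π (X i) - 1)
            + (∑ j, (2 * π (X j) - 1) * (if i ∈ J j then (1 : ℝ) else 0)) / (M : ℝ))
          * Y i := by
  congr 1
  -- rewrite each left summand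
  have h1 : ∀ i ∈ Finset.univ,
      (2 * π (X i) - 1) *
        ((if W i = 1 then Y i else (1 / (M : ℝ)) * ∑ j ∈ J i, Y j)
          - (if W i = 0 then Y i else (1 / (M : ℝ)) * ∑ j ∈ J i, Y j))
      = (2 * π (X i) - 1) * (2 * W i - 1) * Y i
        + (1 / (M : ℝ)) * ∑ j, -((2 * π (X i) - 1) * (2 * W i - 1)
            * (if j ∈ J i then (1 : ℝ) else 0) * Y j) := by
    intro i _
    have hs : ∑ j, -((2 * π (X i) - 1) * (2 * W i - 1)
        * (if j ∈ J i then (1 : ℝ) else 0) * Y j)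
        = -((2 * π (X i) - 1) * (2 * W i - 1) * ∑ j ∈ J i, Y j) := by
      simp [mul_ite, ite_mul, Finset.sum_ite_mem, Finset.mul_sum]
    rw [hs]
    rcases hW i with h | h <;> simp [h] <;> ring
  rw [Finset.sum_congr rfl h1, Finset.sum_add_distrib]
  -- rewrite each right summand
  have h2 : ∀ i ∈ Finset.univ,
      (2 * W i - 1) * ((2 * π (X i) - 1)
          + (∑ j, (2 * π (X j) - 1) * (if i ∈ J j then (1 : ℝ) else 0)) / (M : ℝ)) * Y i
      = (2 * π (X i) - 1) * (2 * W i - 1) * Y i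
        + (1 / (M : ℝ)) * ∑ j, (2 * π (X j) - 1)
            * (if i ∈ J j then (1 : ℝ) else 0) * ((2 * W i - 1) * Y i) := by
    intro i _
    have hs : ∑ j, (2 * π (X j) - 1) * (if i ∈ J j then (1 : ℝ) else 0)
        * ((2 * W i - 1) * Y i)
        = (∑ j, (2 * π (X j) - 1) * (if i ∈ J j then (1 : ℝ) else 0))
          * ((2 * W i - 1) * Y i) := by
      rw [Finset.sum_mul]
    rw [hs]
    ring
  rw [Finset.sum_congr rfl h2, Finset.sum_add_distrib]
  congr 1
  rw [← Finset.mul_sum, ← Finset.mul_sum]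
  congr 1
  rw [Finset.sum_comm]
  apply Finset.sum_congr rfl
  intro i _
  apply Finset.sum_congr rfl
  intro j _
  by_cases hij : i ∈ J j
  · have := hJopp j i hij
    simp [hij, this]; ring
  · simp [hij]
end

section
/- The matching-based advantage estimator admits the decomposition Â_match(π) = Ā(π) + E_M(π) + B_M(π), where Ā(π) = (1/n) Σ_i (2π(X_i)−1)(μ(X_i,1)−μ(X_i,0)), E_M(π) = (1/n) Σ_i (2W_i−1)[(2π(X_i)−1) + K_M(π,i)/M] ε_i with ε_i = Y_i − μ(X_i,W_i), and B_M(π) = (1/n) Σ_i (2W_i−1)(2π(X_i)−1)(1/M) Σ_{j ∈ J_M(i)} [μ(X_i,1−W_i) − μ(X_j,1−W_i)]. -/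
open Finset

/-- Lemma 3: the matching-based advantage estimator decomposes as
`Â_match(π) = Ā(π) + E_M(π) + B_M(π)`. -/
theorem matching_advantage_decomposition {𝒳 : Type*} (n M : ℕ)
    (hn : 0 < n) (hM : 0 < M)
    (X : Fin n → 𝒳) (W : Fin n → ℝ) (Y : Fin n → ℝ)
    (hW : ∀ i, W i = 0 ∨ W i = 1)
    (J : Fin n → Finset (Fin n))
    (hJcard : ∀ i, (J i).card = M)
    (hJopp : ∀ i j, j ∈ J i → W j = 1 - W i)
    (μf : 𝒳 → ℝ → ℝ)
    (π : 𝒳 → ℝ) (hπ : ∀ x, π x = 0 ∨ π x = 1) :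
    -- Â_match(π), in its linear-combination form
    (1 / (n : ℝ)) * ∑ i, (2 * W i - 1) *
        ((2 * π (X i) - 1)
          + (∑ j, (2 * π (X j) - 1) * (if i ∈ J j then (1 : ℝ) else 0)) / (M : ℝ)) * Y i
      = -- Ā(π)
        (1 / (n : ℝ)) * (∑ i, (2 * π (X i) - 1) * (μf (X i) 1 - μf (X i) 0))
        -- E_M(π)
        + (1 / (n : ℝ)) * (∑ i, (2 * W i - 1) *
            ((2 * π (X i) - 1)
              + (∑ j, (2 * π (X j) - 1) * (if i ∈ J j then (1 : ℝ) else 0)) / (M : ℝ))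
            * (Y i - μf (X i) (W i)))
        -- B_M(π)
        + (1 / (n : ℝ)) * (∑ i, (2 * W i - 1) * (2 * π (X i) - 1) *
            ((1 / (M : ℝ)) * ∑ j ∈ J i, (μf (X i) (1 - W i) - μf (X j) (1 - W i)))) := by
  have hMne : (M : ℝ) ≠ 0 := Nat.cast_ne_zero.mpr hM.ne'
  rw [← mul_add, ← mul_add]
  congr 1
  -- split LHS using Y i = (Y i - μ) + μ
  have hsplit : ∀ i : Fin n,
      (2 * W i - 1) * ((2 * π (X i) - 1)
          + (∑ j, (2 * π (X j) - 1) * (if i ∈ J j then (1 : ℝ) else 0)) / (M : ℝ)) * Y i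
      = (2 * W i - 1) * ((2 * π (X i) - 1)
          + (∑ j, (2 * π (X j) - 1) * (if i ∈ J j then (1 : ℝ) else 0)) / (M : ℝ))
          * (Y i - μf (X i) (W i))
        + (2 * W i - 1) * (2 * π (X i) - 1) * μf (X i) (W i)
        + ((2 * W i - 1) * μf (X i) (W i)
            * (∑ j, (2 * π (X j) - 1) * (if i ∈ J j then (1 : ℝ) else 0))) / (M : ℝ) := by
    intro i; ring
  -- Claim A : the cross double sum
  have claimA :
      (∑ i, (2 * W i - 1) * μf (X i) (W i)
          * (∑ j, (2 * π (X j) - 1) * (if i ∈ J j then (1 : ℝ) else 0)))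
      = - ∑ j, (2 * W j - 1) * (2 * π (X j) - 1)
            * (∑ i ∈ J j, μf (X i) (1 - W j)) := by
    have h1 : (∑ i, (2 * W i - 1) * μf (X i) (W i)
          * (∑ j, (2 * π (X j) - 1) * (if i ∈ J j then (1 : ℝ) else 0)))
        = ∑ j, ∑ i, (if i ∈ J j then
            (2 * π (X j) - 1) * ((2 * W i - 1) * μf (X i) (W i)) else 0) := by
      rw [Finset.sum_comm]
      refine Finset.sum_congr rfl fun i _ => ?_
      rw [Finset.mul_sum]
      refine Finset.sum_congr rfl fun j _ => ?_
      by_cases h : i ∈ J j <;> simp [h] <;> ring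
    rw [h1, ← Finset.sum_neg_distrib]
    refine Finset.sum_congr rfl fun j _ => ?_
    rw [Finset.sum_ite_mem, Finset.univ_inter]
    have : ∀ i ∈ J j, (2 * π (X j) - 1) * ((2 * W i - 1) * μf (X i) (W i))
        = -((2 * W j - 1) * (2 * π (X j) - 1) * μf (X i) (1 - W j)) := by
      intro i hi
      rw [hJopp j i hi]; ring
    rw [Finset.sum_congr rfl this, Finset.sum_neg_distrib, Finset.mul_sum]
  -- Claim B : rewrite the B_M term
  have claimB :
      (∑ i, (2 * W i - 1) * (2 * π (X i) - 1) *
          ((1 / (M : ℝ)) * ∑ j ∈ J i, (μf (X i) (1 - W i) - μf (X j) (1 - W i))))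
      = ∑ i, ((2 * W i - 1) * (2 * π (X i) - 1) * μf (X i) (1 - W i)
          - (2 * W i - 1) * (2 * π (X i) - 1)
              * (∑ j ∈ J i, μf (X j) (1 - W i)) / (M : ℝ)) := by
    refine Finset.sum_congr rfl fun i _ => ?_
    rw [Finset.sum_sub_distrib, Finset.sum_const, hJcard i, nsmul_eq_mul]
    field_simp
  -- Claim C : pointwise identity for μ terms
  have claimC : ∀ i : Fin n,
      (2 * W i - 1) * (2 * π (X i) - 1) * μf (X i) (W i)
      = (2 * π (X i) - 1) * (μf (X i) 1 - μf (X i) 0)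
        + (2 * W i - 1) * (2 * π (X i) - 1) * μf (X i) (1 - W i) := by
    intro i
    rcases hW i with h | h <;> rw [h] <;> norm_num <;> ring
  calc
    (∑ i, (2 * W i - 1) * ((2 * π (X i) - 1)
          + (∑ j, (2 * π (X j) - 1) * (if i ∈ J j then (1 : ℝ) else 0)) / (M : ℝ)) * Y i)
        = (∑ i, (2 * W i - 1) * ((2 * π (X i) - 1)
          + (∑ j, (2 * π (X j) - 1) * (if i ∈ J j then (1 : ℝ) else 0)) / (M : ℝ))
          * (Y i - μf (X i) (W i)))
        + (∑ i, (2 * W i - 1) * (2 * π (X i) - 1) * μf (X i) (W i))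
        + (∑ i, (2 * W i - 1) * μf (X i) (W i)
            * (∑ j, (2 * π (X j) - 1) * (if i ∈ J j then (1 : ℝ) else 0))) / (M : ℝ) := by
          rw [Finset.sum_div, ← Finset.sum_add_distrib, ← Finset.sum_add_distrib]
          exact Finset.sum_congr rfl fun i _ => hsplit i
    _ = (∑ i, (2 * W i - 1) * ((2 * π (X i) - 1)
          + (∑ j, (2 * π (X j) - 1) * (if i ∈ J j then (1 : ℝ) else 0)) / (M : ℝ))
          * (Y i - μf (X i) (W i)))
        + ((∑ i, (2 * π (X i) - 1) * (μf (X i) 1 - μf (X i) 0))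
          + (∑ i, (2 * W i - 1) * (2 * π (X i) - 1) * μf (X i) (1 - W i)))
        + (- ∑ j, (2 * W j - 1) * (2 * π (X j) - 1)
            * (∑ i ∈ J j, μf (X i) (1 - W j))) / (M : ℝ) := by
          rw [claimA]
          congr 2
          rw [← Finset.sum_add_distrib]
          exact Finset.sum_congr rfl fun i _ => claimC i
    _ = _ := by
          rw [claimB, Finset.sum_sub_distrib]
          rw [neg_div, Finset.sum_div]
          ring
end
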